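/- If φ is a smooth solution of the traveling-wave equation φ'''' - qφ'' + pφ = -(1/β)(φ²)'' with p ≠ 0, such that φ, φ'', and (φ²)'' are integrable on ℝ and φ', φ''' , (φ²)' tend to 0 at ±∞, then ∫_ℝ φ(z) dz = 0 (solitary waves have zero mass). -/

import Mathlib

open Filter MeasureTheory

lemma int_deriv_zero (g g' : ℝ → ℝ) (hd : ∀ x, HasDerivAt g (g' x) x)
    (hi : Integrable g') (ht : Tendsto g atTop (nhds 0))
    (hb : Tendsto g atBot (nhds 0)) : ∫ x, g' x = 0 := by
  have h1 : ∫ x in Set.Iic (0:ℝ), g' x = g 0 - 0 :=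
    integral_Iic_of_hasDerivAt_of_tendsto' (fun x _ => hd x) hi.integrableOn hb
  have h2 : ∫ x in Set.Ioi (0:ℝ), g' x = 0 - g 0 :=
    integral_Ioi_of_hasDerivAt_of_tendsto' (fun x _ => hd x) hi.integrableOn ht
  have := intervalIntegral.integral_Iic_add_Ioi (b := (0:ℝ)) hi.integrableOn hi.integrableOn
  rw [← this, h1, h2]; ring

/-- Zero mass of solitary waves: if φ solves φ'''' - qφ'' + pφ = -(1/β)(φ²)'' with
p ≠ 0, φ, φ'', (φ²)'' integrable and φ', φ''', (φ²)' → 0 at ±∞, then ∫ φ = 0. -/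
theorem stmt19 (β p q : ℝ) (hβ : β ≠ 0) (hp : p ≠ 0) (φ : ℝ → ℝ)
    (hφ : ContDiff ℝ (⊤ : ℕ∞) φ)
    (hode : ∀ z, iteratedDeriv 4 φ z - q * iteratedDeriv 2 φ z + p * φ z
      = -(1 / β) * iteratedDeriv 2 (fun w => φ w ^ 2) z)
    (hint : Integrable φ)
    (hint2 : Integrable (iteratedDeriv 2 φ))
    (hint3 : Integrable (iteratedDeriv 2 (fun w => φ w ^ 2)))
    (h1top : Tendsto (deriv φ) atTop (nhds 0))
    (h1bot : Tendsto (deriv φ) atBot (nhds 0))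
    (h3top : Tendsto (iteratedDeriv 3 φ) atTop (nhds 0))
    (h3bot : Tendsto (iteratedDeriv 3 φ) atBot (nhds 0))
    (hsqtop : Tendsto (deriv (fun w => φ w ^ 2)) atTop (nhds 0))
    (hsqbot : Tendsto (deriv (fun w => φ w ^ 2)) atBot (nhds 0)) :
    ∫ z, φ z = 0 := by
  have hφ' : ContDiff ℝ (⊤:ℕ∞) φ := hφ.of_le (by simp)
  have hφ2 : ContDiff ℝ (⊤:ℕ∞) (fun w => φ w ^ 2) := hφ'.pow 2
  -- derivatives exist
  have hdφ : ∀ n, ∀ x : ℝ, HasDerivAt (iteratedDeriv n φ) (iteratedDeriv (n+1) φ x) x := by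
    intro n x
    rw [iteratedDeriv_succ]
    have := ((hφ'.iterate_deriv n).differentiable (by simp) x).hasDerivAt
    simpa [iteratedDeriv_eq_iterate] using this
  have hdφ2 : ∀ x : ℝ, HasDerivAt (deriv (fun w => φ w ^ 2))
      (iteratedDeriv 2 (fun w => φ w ^ 2) x) x := by
    intro x
    have := ((hφ2.iterate_deriv 1).differentiable (by simp) x).hasDerivAt
    simpa [iteratedDeriv_eq_iterate] using this
  -- integrability of φ''''
  have hint4 : Integrable (iteratedDeriv 4 φ) := by
    have : iteratedDeriv 4 φ = fun z =>
        -(1 / β) * iteratedDeriv 2 (fun w => φ w ^ 2) z + q * iteratedDeriv 2 φ z - p * φ z := by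
      funext z; have := hode z; linarith
    rw [this]
    exact (((hint3.const_mul _).add (hint2.const_mul q)).sub (hint.const_mul p))
  -- the three integrals of derivatives vanish
  have I4 : ∫ z, iteratedDeriv 4 φ z = 0 :=
    int_deriv_zero (iteratedDeriv 3 φ) _ (hdφ 3) hint4 h3top h3bot
  have I2 : ∫ z, iteratedDeriv 2 φ z = 0 := by
    refine int_deriv_zero (deriv φ) _ (fun x => ?_) hint2 h1top h1bot
    have := hdφ 1 x
    simpa [iteratedDeriv_one] using this
  have I2sq : ∫ z, iteratedDeriv 2 (fun w => φ w ^ 2) z = 0 :=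
    int_deriv_zero (deriv (fun w => φ w ^ 2)) _ hdφ2 hint3 hsqtop hsqbot
  -- integrate the ODE
  have key : ∫ z, (iteratedDeriv 4 φ z - q * iteratedDeriv 2 φ z + p * φ z) =
      ∫ z, -(1 / β) * iteratedDeriv 2 (fun w => φ w ^ 2) z := by
    congr 1; funext z; exact hode z
  have e1 : ∫ z, (iteratedDeriv 4 φ z - q * iteratedDeriv 2 φ z + p * φ z) = p * ∫ z, φ z := by
    rw [integral_add (f := fun z => iteratedDeriv 4 φ z - q * iteratedDeriv 2 φ z)
          (g := fun z => p * φ z) (by exact hint4.sub (hint2.const_mul q)) (hint.const_mul p),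
        integral_sub (f := fun z => iteratedDeriv 4 φ z) (g := fun z => q * iteratedDeriv 2 φ z)
          hint4 (hint2.const_mul q), integral_const_mul, integral_const_mul, I4, I2]
    ring
  have e2 : ∫ z, -(1 / β) * iteratedDeriv 2 (fun w => φ w ^ 2) z = 0 := by
    rw [integral_const_mul, I2sq]; ring
  rw [e1, e2] at key
  have : p * ∫ z, φ z = 0 := by linarith
  exact (mul_eq_zero.mp this).resolve_left hp
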